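/- Let n be a positive integer and let y₁, y₂, y₃, y₄ be pairwise distinct elements of ZMod n. Set z₁ := min(d(y₁,y₂), d(y₂,y₁)). Then f(y₁,y₃) + f(y₁,y₄) + f(y₂,y₃) + f(y₂,y₄) ≥ 4·⌊n/2⌋·⌊(n−1)/2⌋ + z₁² − Δ_n·Δ_{z₁}. -/

import Mathlib

/-- `C2 x` is the binomial-type expression `x(x-1)/2`. -/
def C2 (x : ℤ) : ℤ := x * (x - 1) / 2

/-- `dz x y` is the least nonnegative residue of `y - x` modulo `n`. -/
def dz {n : ℕ} (x y : ZMod n) : ℕ := (y - x).val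

/-- `fz x y = C(d(x,y),2) + C(n - d(x,y),2)` for `x y : ZMod n`. -/
def fz {n : ℕ} (x y : ZMod n) : ℤ := C2 (dz x y) + C2 ((n : ℤ) - dz x y)

/-- `Δ k = 1` if `k` is odd and `0` if `k` is even. -/
def Δ (k : ℕ) : ℤ := if Odd k then 1 else 0

/-! For a fixed `y`, put `dᵢ = d(xᵢ, y)`. Completing squares gives
`2 (f(x₁,y) + f(x₂,y)) = n(n-2) + (d₁ + d₂ - n)² + (d₁ - d₂)²`, while
`4 ⌊n/2⌋ ⌊(n-1)/2⌋ = n(n-2) + Δₙ`. Since `d₁ - d₂ ≡ x₂ - x₁ (mod n)`, the integer `d₁ - d₂`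
is at least the circular distance `z` between `x₁` and `x₂` in absolute value. When `n` is odd
the two squared integers have different parities, which yields the extra `1` unless `z` is odd.
Summing this bound over `y = y₃, y₄` gives the theorem. -/

lemma two_mul_C2 (x : ℤ) : 2 * C2 x = x * (x - 1) :=
  Int.mul_ediv_cancel' (Int.even_mul_pred_self x).two_dvd

lemma two_mul_fz {n : ℕ} (x y : ZMod n) :
    2 * fz x y = (dz x y : ℤ) ^ 2 + ((n : ℤ) - dz x y) ^ 2 - n := by
  rw [fz, mul_add, two_mul_C2, two_mul_C2]
  ring

lemma two_mul_fz_add_fz {n : ℕ} (x₁ x₂ y : ZMod n) :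
    2 * (fz x₁ y + fz x₂ y) = (n : ℤ) * (n - 2)
      + ((dz x₁ y : ℤ) + dz x₂ y - n) ^ 2 + ((dz x₁ y : ℤ) - dz x₂ y) ^ 2 := by
  rw [mul_add, two_mul_fz, two_mul_fz]
  ring

lemma four_mul_div_two_mul_sub_one_div_two (n : ℕ) :
    4 * (((n / 2 : ℕ) : ℤ) * (((n - 1) / 2 : ℕ) : ℤ)) = (n : ℤ) * (n - 2) + Δ n := by
  unfold Δ
  split_ifs with h
  · obtain ⟨k, rfl⟩ := h
    rw [show (2 * k + 1) / 2 = k by omega, show (2 * k + 1 - 1) / 2 = k by omega]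
    push_cast; ring
  · obtain ⟨k, rfl⟩ := Nat.not_odd_iff_even.mp h
    rcases k with _ | k
    · simp
    rw [show (k + 1 + (k + 1)) / 2 = k + 1 by omega, show (k + 1 + (k + 1) - 1) / 2 = k by omega]
    push_cast; ring

section NeZero

variable {n : ℕ} [NeZero n]

lemma natAbs_valMinAbs_sub_eq_min_dz (x₁ x₂ : ZMod n) :
    (x₂ - x₁).valMinAbs.natAbs = min (dz x₁ x₂) (dz x₂ x₁) := by
  rw [ZMod.valMinAbs_natAbs_eq_min, dz, dz, ← neg_sub x₂ x₁, ZMod.neg_val]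
  split_ifs with h <;> simp [h]

lemma intCast_dz_sub_dz (x₁ x₂ y : ZMod n) :
    (((dz x₁ y : ℤ) - dz x₂ y : ℤ) : ZMod n) = x₂ - x₁ := by
  push_cast
  rw [dz, dz, ZMod.natCast_zmod_val, ZMod.natCast_zmod_val]
  ring

lemma min_dz_le_abs_dz_sub_dz (x₁ x₂ y : ZMod n) :
    ((min (dz x₁ x₂) (dz x₂ x₁) : ℕ) : ℤ) ≤ |(dz x₁ y : ℤ) - dz x₂ y| := by
  rw [← natAbs_valMinAbs_sub_eq_min_dz, Int.abs_eq_natAbs, Nat.cast_le]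
  refine ZMod.natAbs_min_of_le_div_two n _ _ ?_ (ZMod.natAbs_valMinAbs_le _)
  rw [ZMod.coe_valMinAbs, intCast_dz_sub_dz]

end NeZero

lemma sq_add_Δ_sub_le_sq_add_sq {n z : ℕ} {u w : ℤ} (hzu : (z : ℤ) ≤ |u|)
    (hpar : u - w ≡ n [ZMOD 2]) :
    (z : ℤ) ^ 2 + Δ n - Δ n * Δ z ≤ u ^ 2 + w ^ 2 := by
  have hzu_sq : (z : ℤ) ^ 2 ≤ u ^ 2 := by
    rw [← sq_abs u]; exact pow_le_pow_left₀ (Nat.cast_nonneg z) hzu 2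
  unfold Δ
  split_ifs with hn hz hz
  · linarith [sq_nonneg w]
  · -- either `|u| = z` is even and then `w` is odd, or `|u| ≥ z + 1`
    rcases hzu.eq_or_lt with heq | hlt
    · have hw : w ≠ 0 := by
        rintro rfl
        rw [Nat.not_odd_iff_even] at hz
        obtain ⟨k, hk⟩ := hz
        obtain ⟨m, hm⟩ := hn
        rw [Int.ModEq] at hpar
        rcases abs_cases u with ⟨hu, -⟩ | ⟨hu, -⟩ <;> omega
      nlinarith [Int.one_le_abs hw, sq_abs w]
    · have : (z : ℤ) + 1 ≤ |u| := hlt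
      nlinarith [sq_abs u]
  · linarith [sq_nonneg w]
  · linarith [sq_nonneg w]

lemma le_two_mul_fz_add_fz {n : ℕ} [NeZero n] (x₁ x₂ y : ZMod n) :
    (n : ℤ) * (n - 2) + Δ n + (min (dz x₁ x₂) (dz x₂ x₁) : ℕ) ^ 2
        - Δ n * Δ (min (dz x₁ x₂) (dz x₂ x₁)) ≤ 2 * (fz x₁ y + fz x₂ y) := by
  rw [two_mul_fz_add_fz]
  have hpar : ((dz x₁ y : ℤ) - dz x₂ y) - (dz x₁ y + dz x₂ y - n) ≡ n [ZMOD 2] := by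
    rw [Int.ModEq]; omega
  have := sq_add_Δ_sub_le_sq_add_sq (min_dz_le_abs_dz_sub_dz x₁ x₂ y) hpar
  push_cast at this ⊢
  linarith

theorem stmt_12_general (n : ℕ) (hn : 0 < n) (y₁ y₂ y₃ y₄ : ZMod n)
    (z₁ : ℕ) (hz₁ : z₁ = min (dz y₁ y₂) (dz y₂ y₁)) :
    4 * (((n / 2 : ℕ) : ℤ) * (((n - 1) / 2 : ℕ) : ℤ)) + (z₁ : ℤ) ^ 2
        - Δ n * Δ z₁ ≤
      fz y₁ y₃ + fz y₁ y₄ + fz y₂ y₃ + fz y₂ y₄ := by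
  have : NeZero n := ⟨hn.ne'⟩
  have h₃ := le_two_mul_fz_add_fz y₁ y₂ y₃
  have h₄ := le_two_mul_fz_add_fz y₁ y₂ y₄
  rw [four_mul_div_two_mul_sub_one_div_two, hz₁]
  linarith

theorem stmt_12 (n : ℕ) (hn : 0 < n) (y₁ y₂ y₃ y₄ : ZMod n)
    (h12 : y₁ ≠ y₂) (h13 : y₁ ≠ y₃) (h14 : y₁ ≠ y₄)
    (h23 : y₂ ≠ y₃) (h24 : y₂ ≠ y₄) (h34 : y₃ ≠ y₄)
    (z₁ : ℕ) (hz₁ : z₁ = min (dz y₁ y₂) (dz y₂ y₁)) :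
    4 * (((n / 2 : ℕ) : ℤ) * (((n - 1) / 2 : ℕ) : ℤ)) + (z₁ : ℤ) ^ 2
        - Δ n * Δ z₁ ≤
      fz y₁ y₃ + fz y₁ y₄ + fz y₂ y₃ + fz y₂ y₄ :=
  stmt_12_general n hn y₁ y₂ y₃ y₄ z₁ hz₁
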